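/- arXiv:2108.05526 — 2 statements merged into one kernel-verified Lean document; each statement's English description precedes it below -/
import Mathlib

section
/- Let (⟨(H_n,E_n) : n<ω⟩, f) be a template of arity k. Then for every ρ ∈ H_∞ there are continuum many (i.e. exactly 2^{ℵ_0} many) (k−1)-tuples (ρ_0,…,ρ_{k−2}) of elements of H_∞ such that (ρ,ρ_0,…,ρ_{k−2}) ∈ E_∞; that is, every leaf is contained in continuum many edges of the hypergraph (H_∞,E_∞). -/
/-- Prepend an element to a `(k-1)`-tuple, forming a `k`-tuple. -/
def fcons {α : Type*} (k : ℕ) (s : α) (v : Fin (k - 1) → α) : Fin k → α :=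
  fun j => if h : (j : ℕ) = 0 then s else v ⟨(j : ℕ) - 1, by have := j.isLt; omega⟩

/-- A template of arity `k`: a sequence of finite `k`-full hypergraphs `(H n, E n)`
(vertices of `H n` are `0, …, H n - 1`, edges are `k`-tuples) together with a function
`f : ℕ → ℕ ∖ {0}` satisfying the conditions of Definition 2.4. -/
structure Template (k : ℕ) where
  H : ℕ → ℕ
  E : (n : ℕ) → Set (Fin k → ℕ)
  f : ℕ → ℕ
  /-- `f` takes values in `ℕ ∖ {0}`. -/
  f_pos : ∀ n, 0 < f n
  /-- (0) `f(n) → ∞` as `n → ∞`. -/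
  f_lim : ∀ N : ℕ, ∃ n : ℕ, ∀ m, n ≤ m → N ≤ f m
  /-- each `H n` is a positive integer (nonempty vertex set). -/
  H_pos : ∀ n, 0 < H n
  /-- edges live on the vertex set `{0, …, H n - 1}`. -/
  edge_lt : ∀ n, ∀ e ∈ E n, ∀ i, e i < H n
  /-- (1) `k`-fullness: the edge relation is invariant under permuting coordinates. -/
  edge_symm : ∀ n, ∀ e ∈ E n, ∀ σ : Equiv.Perm (Fin k), e ∘ σ ∈ E n
  /-- (1) `k`-fullness: every `k`-tuple with fewer than `k` distinct entries is an edge. -/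
  edge_of_rep : ∀ n, ∀ e : Fin k → ℕ, (∀ i, e i < H n) → ¬ Function.Injective e → e ∈ E n
  /-- (2) `f n ≤ H n`. -/
  f_le_H : ∀ n, f n ≤ H n
  /-- (3) Extension: for `t = f n` and any `(k-1)`-tuples `ι 0, …, ι (t-1)` from `H n`,
  there is `s ∈ H n` forming an edge with each of them. -/
  extension : ∀ n, ∀ ι : Fin (f n) → (Fin (k - 1) → ℕ),
      (∀ ℓ j, ι ℓ j < H n) → ∃ s < H n, ∀ ℓ, fcons k s (ι ℓ) ∈ E n

/-- `H_∞`: the set of functions `ρ : ℕ → ℕ` with `ρ n < H n` for all `n`. -/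
def Hinf {k : ℕ} (T : Template k) : Set (ℕ → ℕ) := {ρ | ∀ n, ρ n < T.H n}

/-- `E_∞`: the `k`-ary relation on `H_∞` holding iff the levelwise tuples are edges. -/
def Einf {k : ℕ} (T : Template k) (e : Fin k → (ℕ → ℕ)) : Prop :=
  ∀ n, (fun i => e i n) ∈ T.E n

/-- `X_H`: finite sequences `η` with `η n < H n` for all `n <` length of `η`. -/
def XH {k : ℕ} (T : Template k) : Set (List ℕ) :=
  {η | ∀ n, ∀ h : n < η.length, η.get ⟨n, h⟩ < T.H n}

/-- The constant `k`-tuple with a repeat is an edge. -/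
lemma const_edge {k : ℕ} (hk : 2 ≤ k) (T : Template k) (n : ℕ) (a : ℕ) (ha : a < T.H n) :
    fcons k a (fun _ => a) ∈ T.E n := by
  apply T.edge_of_rep n _ (fun i => by unfold fcons; split <;> exact ha)
  intro hinj
  have h01 : (⟨0, by omega⟩ : Fin k) = ⟨1, by omega⟩ := by
    apply hinj
    unfold fcons
    simp
  simp [Fin.ext_iff] at h01

/-- Swap: if `(s,a,…,a)` is an edge then so is `(a,s,a,…,a)`. -/
lemma swap_edge {k : ℕ} (hk : 2 ≤ k) (T : Template k) (n : ℕ) (s a : ℕ)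
    (h : fcons k s (fun _ => a) ∈ T.E n) :
    fcons k a (fun j => if (j : ℕ) = 0 then s else a) ∈ T.E n := by
  have := T.edge_symm n _ h (Equiv.swap ⟨0, by omega⟩ ⟨1, by omega⟩)
  convert this using 1
  funext j
  simp only [Function.comp]
  by_cases e0 : j = ⟨0, by omega⟩
  · subst e0
    rw [Equiv.swap_apply_left]
    simp [fcons]
  · by_cases e1 : j = ⟨1, by omega⟩
    · subst e1
      rw [Equiv.swap_apply_right]
      simp [fcons]
    · rw [Equiv.swap_apply_of_ne_of_ne e0 e1]
      have hj0 : (j : ℕ) ≠ 0 := fun hc => e0 (Fin.ext hc)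
      have hj1 : (j : ℕ) ≠ 1 := fun hc => e1 (Fin.ext hc)
      have hj2 : (j : ℕ) - 1 ≠ 0 := by omega
      simp [fcons, hj0, hj2]

/-- Key: at levels where `f n ≥ 2`, there is a non-constant `(k-1)`-tuple forming an edge
with `ρ n`. -/
lemma key {k : ℕ} (hk : 2 ≤ k) (T : Template k) (ρ : ℕ → ℕ) (hρ : ρ ∈ Hinf T)
    (n : ℕ) (hn : 2 ≤ T.f n) :
    ∃ w : Fin (k - 1) → ℕ, (∀ j, w j < T.H n) ∧ fcons k (ρ n) w ∈ T.E n ∧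
      ∃ j, w j ≠ ρ n := by
  set b : ℕ := if ρ n = 0 then 1 else 0 with hb
  have hHn : 2 ≤ T.H n := le_trans hn (T.f_le_H n)
  have hblt : b < T.H n := by rw [hb]; split <;> omega
  have hbne : b ≠ ρ n := by rw [hb]; split <;> omega
  obtain ⟨s, hs, hedge⟩ := T.extension n
    (fun ℓ _ => if (ℓ : ℕ) = 0 then ρ n else b)
    (fun ℓ j => by
      split
      · exact hρ n
      · exact hblt)
  have h0 := hedge ⟨0, by omega⟩
  have h1 := hedge ⟨1, by omega⟩
  norm_num at h0 h1
  by_cases hs' : s = ρ n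
  · refine ⟨fun _ => b, fun _ => hblt, ?_, ⟨0, by omega⟩, hbne⟩
    rw [← hs']
    exact h1
  · refine ⟨fun j => if (j : ℕ) = 0 then s else ρ n, ?_, ?_, ⟨0, by omega⟩, ?_⟩
    · intro j
      dsimp only
      split
      · exact hs
      · exact hρ n
    · exact swap_edge hk T n s (ρ n) h0
    · simpa using hs'

/-- every leaf `ρ ∈ H_∞` is contained in continuum many edges of `(H_∞, E_∞)`:
there are exactly `2^ℵ₀` many `(k-1)`-tuples `(ρ₀, …, ρ_{k-2})` of elements of `H_∞` with
`(ρ, ρ₀, …, ρ_{k-2}) ∈ E_∞`. -/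
theorem statement0 {k : ℕ} (hk : 2 ≤ k) (T : Template k)
    (ρ : ℕ → ℕ) (hρ : ρ ∈ Hinf T) :
    Cardinal.mk {v : Fin (k - 1) → (ℕ → ℕ) //
        (∀ j, v j ∈ Hinf T) ∧ Einf T (fcons k ρ v)} = Cardinal.continuum := by
  apply le_antisymm
  · calc Cardinal.mk {v : Fin (k - 1) → (ℕ → ℕ) //
          (∀ j, v j ∈ Hinf T) ∧ Einf T (fcons k ρ v)}
        ≤ Cardinal.mk (Fin (k - 1) → (ℕ → ℕ)) :=
          Cardinal.mk_le_of_injective Subtype.val_injective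
      _ ≤ Cardinal.continuum := by
          rw [Cardinal.mk_arrow]
          simp only [Cardinal.mk_fin, Cardinal.lift_natCast, Cardinal.lift_id]
          have : Cardinal.mk (ℕ → ℕ) = Cardinal.continuum := by
            rw [Cardinal.mk_arrow]
            simp [Cardinal.aleph0_power_aleph0]
          rw [this]
          exact_mod_cast Cardinal.power_nat_le Cardinal.aleph0_le_continuum
  · obtain ⟨N, hN⟩ := T.f_lim 2
    have hkey : ∀ n, N ≤ n → ∃ w : Fin (k - 1) → ℕ,
        (∀ j, w j < T.H n) ∧ fcons k (ρ n) w ∈ T.E n ∧ ∃ j, w j ≠ ρ n :=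
      fun n hn => key hk T ρ hρ n (hN n hn)
    choose w hw1 hw2 hw3 using hkey
    -- the map from Cantor space
    set g : (ℕ → Bool) → (Fin (k - 1) → (ℕ → ℕ)) :=
      fun x j n => if h : N ≤ n then (if x (n - N) then w n h j else ρ n) else ρ n with hg
    have hmem : ∀ x, (∀ j, g x j ∈ Hinf T) ∧ Einf T (fcons k ρ (g x)) := by
      intro x
      constructor
      · intro j n
        simp only [hg]
        split
        · split
          · exact hw1 _ _ _
          · exact hρ n
        · exact hρ n
      · intro n
        have hEq : (fun i => fcons k ρ (g x) i n) = fcons k (ρ n) (fun j => g x j n) := by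
          funext i
          unfold fcons
          split <;> rfl
        rw [hEq]
        by_cases h : N ≤ n
        · by_cases hx : x (n - N) = true
          · have : (fun j => g x j n) = w n h := by
              funext j; simp [hg, h, hx]
            rw [this]; exact hw2 n h
          · have : (fun j => g x j n) = fun _ => ρ n := by
              funext j; simp [hg, h, hx]
            rw [this]; exact const_edge hk T n (ρ n) (hρ n)
        · have : (fun j => g x j n) = fun _ => ρ n := by
            funext j; simp [hg, h]
          rw [this]; exact const_edge hk T n (ρ n) (hρ n)
    have hinj : Function.Injective
        (fun x => (⟨g x, hmem x⟩ : {v : Fin (k - 1) → (ℕ → ℕ) //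
          (∀ j, v j ∈ Hinf T) ∧ Einf T (fcons k ρ v)})) := by
      intro x y hxy
      simp only [Subtype.mk.injEq] at hxy
      funext m
      by_contra hne
      have hNm : N ≤ m + N := by omega
      obtain ⟨j, hj⟩ := hw3 (m + N) hNm
      have := congrFun (congrFun hxy j) (m + N)
      simp only [hg, dif_pos hNm, Nat.add_sub_cancel] at this
      cases hx : x m <;> cases hy : y m
      · exact hne (by rw [hx, hy])
      · rw [hx, hy] at this
        simp at this
        exact hj this.symm
      · rw [hx, hy] at this
        simp at this
        exact hj this
      · exact hne (by rw [hx, hy])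
    have := Cardinal.mk_le_of_injective hinj
    calc Cardinal.continuum = Cardinal.mk (ℕ → Bool) := by
          rw [Cardinal.mk_arrow]; simp [Cardinal.two_power_aleph0]
      _ ≤ _ := this
end

section
/- (Amalgamation property for T^m_0.) Let (⟨(H_n,E_n) : n<ω⟩, f) be a template of arity k and let m < ω. Let M_0, M_1, M_2 be T^m_0-structures with M_0 a substructure of both M_1 and M_2 (i.e. the domain of M_0 is contained in the domains of M_1 and M_2, Q^{M_0}_η = Q^{M_i}_η ∩ M_0 for each predicate and i = 1,2, and R^{M_0} = R^{M_i} ∩ (M_0)^k for i = 1,2), and suppose the domains satisfy M_1 ∩ M_2 = M_0. Then the structure N with domain M_1 ∪ M_2, with Q^N_η = Q^{M_1}_η ∪ Q^{M_2}_η for each η ∈ X_H with lgn(η) ≤ m, and with R^N = R^{M_1} ∪ R^{M_2}, is a T^m_0-structure, and M_1 and M_2 are substructures of N. -/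
/-- A `T^m₀`-structure with domain the set `D ⊆ α`: unary predicates `Q η` for `η ∈ X_H` with
`lgn η ≤ m` and a `k`-ary relation `R`, satisfying the universal axioms of `T^m₀`. -/
structure Tm0On {k : ℕ} (T : Template k) (m : ℕ) {α : Type*} (D : Set α) where
  Q : List ℕ → Set α
  R : Set (Fin k → α)
  /-- the predicates are subsets of the domain. -/
  Q_sub : ∀ η, Q η ⊆ D
  /-- the relation lives on the domain. -/
  R_sub : ∀ e ∈ R, ∀ i, e i ∈ D
  /-- `R` is invariant under permuting coordinates. -/
  R_symm : ∀ e ∈ R, ∀ σ : Equiv.Perm (Fin k), e ∘ σ ∈ R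
  /-- `R` holds only on `k`-tuples of pairwise distinct elements. -/
  R_inj : ∀ e ∈ R, Function.Injective e
  /-- `Q ⟨⟩` names everything. -/
  Q_nil : Q [] = D
  /-- `Q ν` refines `Q η` when `η ⊴ ν`, `lgn ν ≤ m`. -/
  Q_mono : ∀ η ν : List ℕ, ν ∈ XH T → ν.length ≤ m → η <+: ν → Q ν ⊆ Q η
  /-- For `lgn η < m`, the `Q (η ⌢ ⟨i⟩)`, `i < H (lgn η)`, are pairwise disjoint... -/
  Q_disj : ∀ η ∈ XH T, η.length < m →
      ∀ i j : ℕ, i < T.H η.length → j < T.H η.length → i ≠ j →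
      Q (η ++ [i]) ∩ Q (η ++ [j]) = ∅
  /-- ...and cover `Q η`. -/
  Q_cover : ∀ η ∈ XH T, η.length < m → ∀ a ∈ Q η, ∃ i < T.H η.length, a ∈ Q (η ++ [i])
  /-- No edges across predicates whose levelwise tuple is a non-edge of the template. -/
  forbidden : ∀ η : Fin k → List ℕ, (∀ j, η j ∈ XH T) → (∀ j, (η j).length ≤ m) →
      ∀ n : ℕ, (∀ j, n < (η j).length) →
      (fun j => (η j).getD n 0) ∉ T.E n →
      ∀ e : Fin k → α, (∀ j, e j ∈ Q (η j)) → e ∉ R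

/-- `S` is a substructure of `S'`: the domain is contained in the larger domain, each
predicate of `S` is the restriction of the corresponding predicate of `S'` to the smaller
domain, and likewise for the relation. -/
def IsSubOn {k : ℕ} (T : Template k) (m : ℕ) {α : Type*} {D D' : Set α}
    (S : Tm0On T m D) (S' : Tm0On T m D') : Prop :=
  D ⊆ D' ∧ (∀ η : List ℕ, η ∈ XH T → η.length ≤ m → S.Q η = S'.Q η ∩ D) ∧
    S.R = {e | e ∈ S'.R ∧ ∀ i, e i ∈ D}


/-!
Since `M₁ ∩ M₂ = M₀` and `M₀` is a substructure of both, an element of `M₁` lying in a predicate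
or relation of `M₂` already lies in `M₀`, hence in the same predicate or relation of `M₁`. So
every configuration witnessed in the union by a tuple from `M₁` is witnessed in `M₁` itself
(and likewise for `M₂`), and each universal axiom of `T^m₀` transfers from the factors to the
union.
-/

theorem append_singleton_mem_XH {k : ℕ} {T : Template k} {η : List ℕ} (hη : η ∈ XH T) {i : ℕ}
    (hi : i < T.H η.length) : η ++ [i] ∈ XH T := by
  intro n hn
  rw [List.length_append, List.length_singleton] at hn
  rcases Nat.lt_or_ge n η.length with h | h
  · simpa [List.getElem_append_left h] using hη n h
  · obtain rfl : n = η.length := by omega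
    simpa using hi

namespace Tm0On

variable {k : ℕ} {T : Template k} {m : ℕ} {α : Type*} {D0 D1 D2 : Set α}
  {S0 : Tm0On T m D0} {S1 : Tm0On T m D1} {S2 : Tm0On T m D2}

theorem mem_Q_of_isSubOn (h01 : IsSubOn T m S0 S1) (h02 : IsSubOn T m S0 S2)
    (hD : D1 ∩ D2 ⊆ D0) :
    ∀ η ∈ XH T, η.length ≤ m → ∀ a ∈ S2.Q η, a ∈ D1 → a ∈ S1.Q η := by
  intro η hη hlen a ha haD
  have ha0 : a ∈ S0.Q η := by
    rw [h02.2.1 η hη hlen]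
    exact ⟨ha, hD ⟨haD, S2.Q_sub η ha⟩⟩
  rw [h01.2.1 η hη hlen] at ha0
  exact ha0.1

theorem mem_R_of_isSubOn (h01 : IsSubOn T m S0 S1) (h02 : IsSubOn T m S0 S2)
    (hD : D1 ∩ D2 ⊆ D0) : ∀ e ∈ S2.R, (∀ i, e i ∈ D1) → e ∈ S1.R := by
  intro e he heD
  have he0 : e ∈ S0.R := by
    rw [h02.2.2]
    exact ⟨he, fun i => hD ⟨heD i, S2.R_sub e he i⟩⟩
  rw [h01.2.2] at he0
  exact he0.1

variable (S1 S2)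

def union
    (hQ12 : ∀ η ∈ XH T, η.length ≤ m → ∀ a ∈ S1.Q η, a ∈ D2 → a ∈ S2.Q η)
    (hQ21 : ∀ η ∈ XH T, η.length ≤ m → ∀ a ∈ S2.Q η, a ∈ D1 → a ∈ S1.Q η) :
    Tm0On T m (D1 ∪ D2) where
  Q η := S1.Q η ∪ S2.Q η
  R := S1.R ∪ S2.R
  Q_sub η := Set.union_subset_union (S1.Q_sub η) (S2.Q_sub η)
  R_sub := by
    rintro e (he | he) i
    exacts [Or.inl (S1.R_sub e he i), Or.inr (S2.R_sub e he i)]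
  R_symm := by
    rintro e (he | he) σ
    exacts [Or.inl (S1.R_symm e he σ), Or.inr (S2.R_symm e he σ)]
  R_inj := by
    rintro e (he | he)
    exacts [S1.R_inj e he, S2.R_inj e he]
  Q_nil := by rw [S1.Q_nil, S2.Q_nil]
  Q_mono := by
    rintro η ν hν hlen hpre a (ha | ha)
    exacts [Or.inl (S1.Q_mono η ν hν hlen hpre ha), Or.inr (S2.Q_mono η ν hν hlen hpre ha)]
  Q_disj := by
    intro η hη hlen i j hi hj hij
    have to1 : ∀ l < T.H η.length, ∀ a ∈ S2.Q (η ++ [l]), a ∈ D1 → a ∈ S1.Q (η ++ [l]) :=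
      fun l hl => hQ21 _ (append_singleton_mem_XH hη hl) (by simpa using hlen)
    have disj1 := Set.eq_empty_iff_forall_notMem.1 (S1.Q_disj η hη hlen i j hi hj hij)
    have disj2 := Set.eq_empty_iff_forall_notMem.1 (S2.Q_disj η hη hlen i j hi hj hij)
    refine Set.eq_empty_iff_forall_notMem.2 ?_
    rintro a ⟨hai | hai, haj | haj⟩
    · exact disj1 a ⟨hai, haj⟩
    · exact disj1 a ⟨hai, to1 j hj a haj (S1.Q_sub _ hai)⟩
    · exact disj1 a ⟨to1 i hi a hai (S1.Q_sub _ haj), haj⟩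
    · exact disj2 a ⟨hai, haj⟩
  Q_cover := by
    rintro η hη hlen a (ha | ha)
    · obtain ⟨i, hi, hai⟩ := S1.Q_cover η hη hlen a ha
      exact ⟨i, hi, Or.inl hai⟩
    · obtain ⟨i, hi, hai⟩ := S2.Q_cover η hη hlen a ha
      exact ⟨i, hi, Or.inr hai⟩
  forbidden := by
    rintro η hη hlen n hn hnE e he (heR | heR)
    · refine S1.forbidden η hη hlen n hn hnE e (fun j => ?_) heR
      exact (he j).elim id fun h => hQ21 _ (hη j) (hlen j) _ h (S1.R_sub e heR j)
    · refine S2.forbidden η hη hlen n hn hnE e (fun j => ?_) heR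
      exact (he j).elim (fun h => hQ12 _ (hη j) (hlen j) _ h (S2.R_sub e heR j)) id

variable {S1 S2}

theorem isSubOn_of_eq_union {D : Set α} (SN : Tm0On T m D) (hD1 : D1 ⊆ D)
    (hQ : ∀ η ∈ XH T, η.length ≤ m → SN.Q η = S1.Q η ∪ S2.Q η) (hR : SN.R = S1.R ∪ S2.R)
    (hQ21 : ∀ η ∈ XH T, η.length ≤ m → ∀ a ∈ S2.Q η, a ∈ D1 → a ∈ S1.Q η)
    (hR21 : ∀ e ∈ S2.R, (∀ i, e i ∈ D1) → e ∈ S1.R) :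
    IsSubOn T m S1 SN := by
  refine ⟨hD1, fun η hη hlen => ?_, ?_⟩
  · ext a
    rw [hQ η hη hlen]
    exact ⟨fun ha => ⟨Or.inl ha, S1.Q_sub η ha⟩,
      fun ⟨ha, haD⟩ => ha.elim id fun h => hQ21 η hη hlen a h haD⟩
  · ext e
    rw [hR]
    exact ⟨fun he => ⟨Or.inl he, S1.R_sub e he⟩,
      fun ⟨he, heD⟩ => he.elim id fun h => hR21 e h heD⟩

end Tm0On

theorem statement5_general {k : ℕ} (T : Template k) (m : ℕ) {α : Type*}
    {D0 D1 D2 : Set α}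
    (S0 : Tm0On T m D0) (S1 : Tm0On T m D1) (S2 : Tm0On T m D2)
    (h01 : IsSubOn T m S0 S1) (h02 : IsSubOn T m S0 S2)
    (hD : D1 ∩ D2 = D0) :
    ∃ SN : Tm0On T m (D1 ∪ D2),
      (∀ η : List ℕ, η ∈ XH T → η.length ≤ m → SN.Q η = S1.Q η ∪ S2.Q η) ∧
      SN.R = S1.R ∪ S2.R ∧
      IsSubOn T m S1 SN ∧ IsSubOn T m S2 SN := by
  have hD21 : D2 ∩ D1 ⊆ D0 := hD ▸ (Set.inter_comm D2 D1).subset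
  have hQ12 := Tm0On.mem_Q_of_isSubOn h02 h01 hD21
  have hQ21 := Tm0On.mem_Q_of_isSubOn h01 h02 hD.subset
  refine ⟨Tm0On.union S1 S2 hQ12 hQ21, fun _ _ _ => rfl, rfl, ?_, ?_⟩
  · exact Tm0On.isSubOn_of_eq_union _ Set.subset_union_left (fun _ _ _ => rfl) rfl hQ21
      (Tm0On.mem_R_of_isSubOn h01 h02 hD.subset)
  · exact Tm0On.isSubOn_of_eq_union _ Set.subset_union_right (fun _ _ _ => Set.union_comm _ _)
      (Set.union_comm _ _) hQ12 (Tm0On.mem_R_of_isSubOn h02 h01 hD21)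

/-- Amalgamation for `T^m₀`: if `M₀` is a common substructure of the
`T^m₀`-structures `M₁, M₂` and the domains satisfy `M₁ ∩ M₂ = M₀`, then the union structure
(union of domains, predicates, and relations) is a `T^m₀`-structure containing `M₁` and `M₂`
as substructures. -/
theorem statement5 {k : ℕ} (hk : 2 ≤ k) (T : Template k) (m : ℕ) {α : Type*}
    {D0 D1 D2 : Set α}
    (S0 : Tm0On T m D0) (S1 : Tm0On T m D1) (S2 : Tm0On T m D2)
    (h01 : IsSubOn T m S0 S1) (h02 : IsSubOn T m S0 S2)
    (hD : D1 ∩ D2 = D0) :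
    ∃ SN : Tm0On T m (D1 ∪ D2),
      (∀ η : List ℕ, η ∈ XH T → η.length ≤ m → SN.Q η = S1.Q η ∪ S2.Q η) ∧
      SN.R = S1.R ∪ S2.R ∧
      IsSubOn T m S1 SN ∧ IsSubOn T m S2 SN :=
  statement5_general T m S0 S1 S2 h01 h02 hD
end
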